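/- Let C ⊆ ℝ^d be a rational polyhedral cone and P = C ∩ {x : Σ x_i = 1} a rational polytope, and let m be a vertex of P with Σ m_i > 0. Then there is a smallest positive scalar λ such that λm has all integer coordinates, and for any decomposition λm = u₁ + ⋯ + u_t with each u_j a non-zero non-negative integer vector in C satisfying Σ (u_j)_i > 0 and each u_j a non-negative rational multiple of a point of P, all but possibly one of the u_j must be zero vectors — i.e., λm admits no non-trivial decomposition into two or more non-zero integer points of C. -/

import Mathlib

/-!
A vertex `m₀` of `P` is rational: the constraints active at `m₀`, together with `∑ xᵢ = 1`, have
trivial kernel (a kernel vector `y` would put `m₀` in the middle of the segment `m₀ ± ε y ⊆ P`),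
so `m₀` is the unique real solution of a rational linear system. Hence `m₀` has positive integer
multipliers, all of the form `z / |m₀ i|` with `z ∈ ℤ`, and so a least one `λ`.
If `λ m₀ = ∑ cⱼ pⱼ` with `pⱼ ∈ P`, summing coordinates gives `∑ cⱼ = λ`, so `m₀` is a convex
combination of the `pⱼ` and extremality forces `pⱼ = m₀` whenever `cⱼ ≠ 0`. Every non-zero summand
is then an integer vector `cⱼ m₀`, so `cⱼ ≥ λ`, and two of them would already exceed `λ`.
-/

open Matrix Finset Filter Topology

section ConeSection

variable {m n : Type*}

theorem Matrix.exists_map_eq_of_mulVec_eq [Fintype m] [Fintype n] [DecidableEq n] {K L : Type*}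
    [Field K] [Field L] [LinearOrder L] [IsStrictOrderedRing L] (f : K →+* L) (M : Matrix m n K)
    (b : m → K) {x : n → L} (hM : ∀ y, M.map f *ᵥ y = 0 → y = 0) (hx : M.map f *ᵥ x = f ∘ b) :
    ∃ q : n → K, f ∘ q = x := by
  -- `Mᵀ M` is square with the same kernel as `M`, so it is invertible, already over `K`.
  set N := Mᵀ * M
  have hNf : N.map f = (M.map f)ᵀ * M.map f := by rw [Matrix.map_mul, transpose_map]
  have hNinj : Function.Injective (N.map f).mulVec := by
    have h := ker_mulVecLin_transpose_mul_self (M.map f)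
    rw [(LinearMap.ker_eq_bot' (f := (M.map f).mulVecLin)).mpr hM, ← hNf,
      LinearMap.ker_eq_bot] at h
    exact h
  have hN : IsUnit N.det := by
    rw [isUnit_iff_ne_zero]
    intro h0
    have := mulVec_injective_iff_isUnit.mp hNinj
    rw [isUnit_iff_isUnit_det, ← RingHom.mapMatrix_apply, ← RingHom.map_det, h0, map_zero] at this
    exact not_isUnit_zero this
  refine ⟨N⁻¹ *ᵥ (Mᵀ *ᵥ b), hNinj ?_⟩
  calc N.map f *ᵥ (f ∘ (N⁻¹ *ᵥ (Mᵀ *ᵥ b))) = f ∘ (N *ᵥ (N⁻¹ *ᵥ (Mᵀ *ᵥ b))) :=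
        funext fun i => (f.map_mulVec N _ i).symm
    _ = f ∘ (Mᵀ *ᵥ b) := by rw [mulVec_mulVec, mul_nonsing_inv N hN, one_mulVec]
    _ = (M.map f)ᵀ *ᵥ (M.map f *ᵥ x) := by
        rw [hx, ← transpose_map]; exact funext fun i => f.map_mulVec _ _ i
    _ = N.map f *ᵥ x := by rw [hNf, mulVec_mulVec]

variable [Fintype n]

def Matrix.coneSection (B : Matrix m n ℝ) : Set (n → ℝ) :=
  {z | 0 ≤ B *ᵥ z} ∩ {z | ∑ i, z i = 1}

theorem Matrix.convex_coneSection (B : Matrix m n ℝ) : Convex ℝ B.coneSection :=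
  ((convex_Ici 0).linear_preimage B.mulVecLin).inter
    (convex_hyperplane ⟨fun _ _ => sum_add_distrib, fun _ _ => (mul_sum ..).symm⟩ 1)

theorem Matrix.eventually_add_smul_mem_coneSection [Finite m] (B : Matrix m n ℝ) {x v : n → ℝ}
    (hx : x ∈ B.coneSection) (hv : ∀ i, (B *ᵥ x) i = 0 → (B *ᵥ v) i = 0)
    (hv₁ : ∑ i, v i = 0) : ∀ᶠ ε in 𝓝 (0 : ℝ), x + ε • v ∈ B.coneSection := by
  have hx₁ : ∑ i, x i = 1 := hx.2
  have hsum (ε : ℝ) : ∑ i, (x + ε • v) i = 1 := by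
    simp [sum_add_distrib, ← mul_sum, hv₁, hx₁]
  simp only [coneSection, Set.mem_inter_iff, Set.mem_ofPred_eq, hsum, and_true, Pi.le_def,
    mulVec_add, mulVec_smul, eventually_all]
  intro i
  rcases (hx.1 i).eq_or_lt with h | h
  · simp [← h, hv i h.symm]
  · have hlim : Tendsto (fun ε : ℝ => (B *ᵥ x) i + ε * (B *ᵥ v) i) (𝓝 0) (𝓝 ((B *ᵥ x) i)) :=
      (continuous_const.add (continuous_id.mul continuous_const)).tendsto' 0 _ (by simp)
    filter_upwards [hlim.eventually (eventually_gt_nhds h)] with ε hε using by simpa using hε.le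

theorem Matrix.eq_zero_of_mem_extremePoints_coneSection [Finite m] (B : Matrix m n ℝ)
    {x y : n → ℝ} (hx : x ∈ B.coneSection.extremePoints ℝ)
    (hy : ∀ i, (B *ᵥ x) i = 0 → (B *ᵥ y) i = 0) (hy₁ : ∑ i, y i = 0) : y = 0 := by
  have hplus := B.eventually_add_smul_mem_coneSection hx.1 hy hy₁
  have hminus := B.eventually_add_smul_mem_coneSection hx.1 (v := -y)
    (fun i hi => by simp [mulVec_neg, hy i hi]) (by simp [hy₁])
  obtain ⟨ε, ⟨hxp, hxm⟩, hε⟩ :=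
    (((hplus.and hminus).filter_mono nhdsWithin_le_nhds).and self_mem_nhdsWithin).exists
      (f := 𝓝[≠] (0 : ℝ))
  have hmid : x ∈ openSegment ℝ (x + ε • y) (x + ε • -y) :=
    ⟨1 / 2, 1 / 2, by norm_num, by norm_num, by norm_num, by module⟩
  exact (smul_eq_zero.mp (add_eq_left.mp (hx.2 hxp hxm hmid))).resolve_left hε

theorem Matrix.exists_ratCast_eq_of_mem_extremePoints_coneSection [Fintype m] (A : Matrix m n ℚ)
    {x : n → ℝ} (hx : x ∈ (A.map (↑)).coneSection.extremePoints ℝ) : ∃ q : n → ℚ, (↑) ∘ q = x := by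
  classical
  let M : Matrix ({i // (A.map (↑) *ᵥ x) i = 0} ⊕ Unit) n ℚ :=
    of (Sum.elim (fun i => A i.1) fun _ => 1)
  have hM (z : n → ℝ) : M.map (Rat.castHom ℝ) *ᵥ z =
      Sum.elim (fun i => (A.map (↑) *ᵥ z) i.1) (fun _ => ∑ j, z j) := by
    funext r
    rcases r with i | _
    · rfl
    · change ∑ j, ((1 : ℚ) : ℝ) * z j = _
      simp
  refine exists_map_eq_of_mulVec_eq (Rat.castHom ℝ) M (Sum.elim 0 1) (fun y hy => ?_) ?_
  · rw [hM] at hy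
    exact eq_zero_of_mem_extremePoints_coneSection _ hx
      (fun i hi => congr_fun hy (.inl ⟨i, hi⟩)) (congr_fun hy (.inr ()))
  · rw [hM]
    funext r
    rcases r with i | _
    · simp [i.2]
    · simpa using hx.1.2

end ConeSection

def integerMultipliers {n : Type*} (v : n → ℝ) : Set ℝ :=
  {μ | 0 < μ ∧ ∀ i, ∃ z : ℤ, μ * v i = z}

theorem integerMultipliers_ratCast_nonempty {n : Type*} [Fintype n] (q : n → ℚ) :
    (integerMultipliers ((↑) ∘ q : n → ℝ)).Nonempty := by
  refine ⟨∏ i, ((q i).den : ℝ), by positivity, fun i => ?_⟩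
  obtain ⟨k, hk⟩ := dvd_prod_of_mem (fun j => (q j).den) (mem_univ i)
  have hprod : ∏ j, ((q j).den : ℝ) = (q i).den * k := by exact_mod_cast hk
  have hnum : ((q i).den : ℝ) * (q i : ℝ) = (q i).num := by
    exact_mod_cast Rat.den_mul_eq_num (q i)
  refine ⟨(q i).num * k, ?_⟩
  rw [Function.comp_apply, hprod]
  push_cast
  linear_combination (k : ℝ) * hnum

theorem exists_isLeast_integerMultipliers {n : Type*} {v : n → ℝ} (hv : v ≠ 0)
    (hne : (integerMultipliers v).Nonempty) : ∃ lam, IsLeast (integerMultipliers v) lam := by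
  obtain ⟨i, hi⟩ := Function.ne_iff.mp hv
  have ha : 0 < |v i| := abs_pos.mpr hi
  have hdiv : ∀ μ ∈ integerMultipliers v, ∃ z : ℤ, μ = z / |v i| := by
    rintro μ ⟨hμ, hμz⟩
    obtain ⟨z, hz⟩ := hμz i
    refine ⟨|z|, ?_⟩
    rw [eq_div_iff ha.ne', Int.cast_abs, ← hz, abs_mul, abs_of_pos hμ]
  obtain ⟨z₀, hz₀, hmin⟩ := Int.exists_least_of_bdd
    (P := fun z : ℤ => (z / |v i| : ℝ) ∈ integerMultipliers v)
    ⟨0, fun z hz => by exact_mod_cast ((div_pos_iff_of_pos_right ha).mp hz.1).le⟩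
    (by obtain ⟨μ, hμ⟩ := hne; obtain ⟨z, rfl⟩ := hdiv μ hμ; exact ⟨z, hμ⟩)
  refine ⟨z₀ / |v i|, hz₀, fun μ hμ => ?_⟩
  obtain ⟨z, rfl⟩ := hdiv μ hμ
  exact div_le_div_of_nonneg_right (by exact_mod_cast hmin z hμ) ha.le

theorem eq_of_mem_extremePoints_of_sum_smul_eq {E ι : Type*} [AddCommGroup E] [Module ℝ E]
    {A : Set E} (hA : Convex ℝ A) {x : E} (hx : x ∈ A.extremePoints ℝ) {s : Finset ι}
    {w : ι → ℝ} {p : ι → E} (hw₀ : ∀ j ∈ s, 0 ≤ w j) (hw₁ : ∑ j ∈ s, w j = 1)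
    (hp : ∀ j ∈ s, p j ∈ A) (hxp : ∑ j ∈ s, w j • p j = x) {k : ι} (hk : k ∈ s)
    (hwk : w k ≠ 0) : p k = x := by
  classical
  -- The points other than `x` carry positive weight, and their centre of mass is `x`.
  by_contra hpk
  set t := s.filter (p · ≠ x)
  have ht₀ : ∀ j ∈ t, 0 ≤ w j := fun j hj => hw₀ j (mem_filter.1 hj).1
  have hW : 0 < ∑ j ∈ t, w j :=
    ((hw₀ k hk).lt_of_ne' hwk).trans_le (single_le_sum ht₀ (mem_filter.2 ⟨hk, hpk⟩))
  have hrest : ∑ j ∈ t, w j • p j = (∑ j ∈ t, w j) • x := by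
    have hsmul := sum_filter_add_sum_filter_not s (p · ≠ x) (fun j => w j • p j)
    have hw := sum_filter_add_sum_filter_not s (p · ≠ x) w
    have hfix : ∑ j ∈ s with ¬p j ≠ x, w j • p j = (∑ j ∈ s with ¬p j ≠ x, w j) • x := by
      rw [sum_smul]
      exact sum_congr rfl fun j hj => by rw [not_not.1 (mem_filter.1 hj).2]
    rw [hxp, hfix] at hsmul
    rw [hw₁] at hw
    calc ∑ j ∈ t, w j • p j = (1 - ∑ j ∈ s with ¬p j ≠ x, w j) • x := by
          rw [sub_smul, one_smul]; exact eq_sub_of_add_eq hsmul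
      _ = (∑ j ∈ t, w j) • x := by rw [← hw, add_sub_cancel_right]
  have hcm := t.centerMass_mem_convexHull ht₀ hW (z := p)
    (s := A \ {x}) fun j hj => ⟨hp j (mem_filter.1 hj).1, (mem_filter.1 hj).2⟩
  rw [Finset.centerMass, hrest, inv_smul_smul₀ hW.ne'] at hcm
  exact (hA.mem_extremePoints_iff_mem_sdiff_convexHull_sdiff.1 hx).2 hcm

theorem subsingleton_smul_ne_zero_of_smul_eq_sum {n ι : Type*} [Fintype n] [Fintype ι]
    {P : Set (n → ℝ)} (hP : Convex ℝ P) (hP₁ : ∀ p ∈ P, ∑ i, p i = 1) {x : n → ℝ}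
    (hx : x ∈ P.extremePoints ℝ) {lam : ℝ} (hlam : IsLeast (integerMultipliers x) lam)
    {c : ι → ℝ} {p : ι → n → ℝ}
    (hc : ∀ j, 0 ≤ c j) (hp : ∀ j, p j ∈ P) (hint : ∀ j i, ∃ z : ℤ, (c j • p j) i = z)
    (hsum : lam • x = ∑ j, c j • p j) : {j | c j • p j ≠ 0}.Subsingleton := by
  have hlam₀ := hlam.1.1
  have hc_sum : ∑ j, c j = lam := by
    have := congrArg (fun v : n → ℝ => ∑ i, v i) hsum
    simp only [Pi.smul_apply, smul_eq_mul, ← mul_sum, hP₁ x hx.1, mul_one, Finset.sum_apply]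
      at this
    rw [sum_comm] at this
    simpa [← mul_sum, hP₁ _ (hp _)] using this.symm
  have hpx : ∀ j, c j ≠ 0 → p j = x := fun j hj =>
    eq_of_mem_extremePoints_of_sum_smul_eq hP hx (w := fun j => c j / lam)
      (fun j _ => div_nonneg (hc j) hlam₀.le) (by rw [← sum_div, hc_sum, div_self hlam₀.ne'])
      (fun j _ => hp j)
      (by simp_rw [div_eq_inv_mul, mul_smul, ← smul_sum, ← hsum, inv_smul_smul₀ hlam₀.ne'])
      (mem_univ j) (div_ne_zero hj hlam₀.ne')
  have hle : ∀ j, c j • p j ≠ 0 → lam ≤ c j := by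
    intro j hj
    have hcj : c j ≠ 0 := left_ne_zero_of_smul hj
    refine hlam.2 ⟨(hc j).lt_of_ne' hcj, fun i => ?_⟩
    simpa [hpx j hcj] using hint j i
  intro j₁ hj₁ j₂ hj₂
  by_contra hne
  have := add_le_sum (fun j _ => hc j) (mem_univ j₁) (mem_univ j₂) hne
  linarith [hle j₁ hj₁, hle j₂ hj₂]

theorem vertex_smallest_multiple_indecomposable_general (d : ℕ)
    (C : Set (Fin d → ℝ))
    (hCrat : ∃ (kk : ℕ) (A : Fin kk → Fin d → ℚ),
      C = {x : Fin d → ℝ | ∀ i, 0 ≤ ∑ jj, (A i jj : ℝ) * x jj})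
    (P : Set (Fin d → ℝ))
    (hP : P = C ∩ {x : Fin d → ℝ | ∑ i, x i = 1})
    (m₀ : Fin d → ℝ) (hm₀ : m₀ ∈ Set.extremePoints ℝ P) :
    ∃ lam : ℝ, 0 < lam ∧ (∀ i, ∃ z : ℤ, lam * m₀ i = (z : ℝ)) ∧
      (∀ μ : ℝ, 0 < μ → (∀ i, ∃ z : ℤ, μ * m₀ i = (z : ℝ)) → lam ≤ μ) ∧
      ∀ (t : ℕ) (u : Fin t → Fin d → ℝ),
        (∀ j, u j ∈ C) →
        (∀ j i, 0 ≤ u j i) →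
        (∀ j i, ∃ z : ℤ, u j i = (z : ℝ)) →
        (∀ j, ∃ (c : ℝ) (p : Fin d → ℝ), 0 ≤ c ∧ (∃ r : ℚ, c = (r : ℝ)) ∧
          p ∈ P ∧ u j = c • p) →
        (lam • m₀ = ∑ j, u j) →
        Set.Subsingleton {j : Fin t | u j ≠ 0} := by
  obtain ⟨k, A, rfl⟩ := hCrat
  obtain rfl : P = ((of A).map ((↑) : ℚ → ℝ)).coneSection := hP
  obtain ⟨q, rfl⟩ := (of A).exists_ratCast_eq_of_mem_extremePoints_coneSection hm₀
  have hq : ((↑) ∘ q : Fin d → ℝ) ≠ 0 := fun h0 => by simpa [h0] using hm₀.1.2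
  obtain ⟨lam, hlam⟩ :=
    exists_isLeast_integerMultipliers hq (integerMultipliers_ratCast_nonempty q)
  refine ⟨lam, hlam.1.1, hlam.1.2, fun μ hμ hμz => hlam.2 ⟨hμ, hμz⟩, ?_⟩
  intro t u _ _ hu_int hu hsum
  choose c p hc _ hp hup using hu
  obtain rfl : u = fun j => c j • p j := funext hup
  exact subsingleton_smul_ne_zero_of_smul_eq_sum (convex_coneSection _) (fun _ hp => hp.2) hm₀
    hlam hc hp hu_int hsum

/-- Let `C` be a rational polyhedral cone in ℝ^d (cut out by finitely
many rational halfspaces), let `P = C ∩ {x | ∑ x i = 1}`, and let `m₀` be a vertex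
(extreme point) of `P` with `∑ m₀ i > 0`.  Then there is a smallest positive scalar
`lam` such that `lam • m₀` has all integer coordinates, and for any decomposition
`lam • m₀ = u₁ + ⋯ + u_t` where each `u j` lies in `C`, has non-negative integer
coordinates, and is a non-negative rational multiple of a point of `P`, all but at
most one of the `u j` are zero. -/
theorem vertex_smallest_multiple_indecomposable (d : ℕ)
    (C : Set (Fin d → ℝ))
    (hCrat : ∃ (kk : ℕ) (A : Fin kk → Fin d → ℚ),
      C = {x : Fin d → ℝ | ∀ i, 0 ≤ ∑ jj, (A i jj : ℝ) * x jj})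
    (P : Set (Fin d → ℝ))
    (hP : P = C ∩ {x : Fin d → ℝ | ∑ i, x i = 1})
    (m₀ : Fin d → ℝ) (hm₀ : m₀ ∈ Set.extremePoints ℝ P)
    (hm₀pos : 0 < ∑ i, m₀ i) :
    ∃ lam : ℝ, 0 < lam ∧ (∀ i, ∃ z : ℤ, lam * m₀ i = (z : ℝ)) ∧
      (∀ μ : ℝ, 0 < μ → (∀ i, ∃ z : ℤ, μ * m₀ i = (z : ℝ)) → lam ≤ μ) ∧
      ∀ (t : ℕ) (u : Fin t → Fin d → ℝ),
        (∀ j, u j ∈ C) →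
        (∀ j i, 0 ≤ u j i) →
        (∀ j i, ∃ z : ℤ, u j i = (z : ℝ)) →
        (∀ j, ∃ (c : ℝ) (p : Fin d → ℝ), 0 ≤ c ∧ (∃ r : ℚ, c = (r : ℝ)) ∧
          p ∈ P ∧ u j = c • p) →
        (lam • m₀ = ∑ j, u j) →
        Set.Subsingleton {j : Fin t | u j ≠ 0} :=
  vertex_smallest_multiple_indecomposable_general d C hCrat P hP m₀ hm₀
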